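/- (One-stage selection: the γ-rule weakly beats group-oblivious and demographic parity weakly beats the γ-rule.) For x in the feasible set X = {x ∈ (0,1) : (α₁ − p_A x)/p_B ∈ (0,1)}, let t_A(x), t_B(x) be the unique reals with Φ^c(t_A(x)) = x and Φ^c(t_B(x)) = (α₁ − p_A x)/p_B, and define N(x) = p_A·φ(t_A(x))/s_A + p_B·φ(t_B(x))/s_B. Let x^obl = Φ^c((θ̂ − μ)/s_A) where θ̂ is the unique group-oblivious threshold with p_A·Φ^c((θ̂−μ)/s_A) + p_B·Φ^c((θ̂−μ)/s_B) = α₁. For γ ∈ [0,1] set x^γ = min(max(x^obl, γα₁/(p_B + γ p_A)), α₁/(p_A + γ p_B)). Then x^γ ∈ X, and N(α₁) ≥ N(x^γ) ≥ N(x^obl), where the first inequality is strict whenever x^γ ≠ α₁ and the second is strict whenever x^γ ≠ x^obl. -/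

import Mathlib

open MeasureTheory Set

/-- Standard normal density. -/
noncomputable def phi (t : ℝ) : ℝ := Real.exp (-t ^ 2 / 2) / Real.sqrt (2 * Real.pi)

/-- Standard normal CDF. -/
noncomputable def Phi (t : ℝ) : ℝ := ∫ u in Set.Iic t, phi u

/-- Standard normal complementary CDF. -/
noncomputable def Phic (t : ℝ) : ℝ := 1 - Phi t

/-- Feasible first-stage selection fractions `x` for group `A`
(with `p_B = 1 - p_A`). -/
def feas (pA α₁ : ℝ) : Set ℝ :=
  {x : ℝ | x ∈ Set.Ioo (0 : ℝ) 1 ∧ (α₁ - pA * x) / (1 - pA) ∈ Set.Ioo (0 : ℝ) 1}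

/-- `N(x) = p_A φ(t_A(x))/s_A + p_B φ(t_B(x))/s_B`, where `t_A(x), t_B(x)` are
the standardized thresholds selecting fractions `x` and `(α₁ - p_A x)/p_B`. -/
noncomputable def Nfun (σW σA σB pA : ℝ) (tA tB : ℝ → ℝ) (x : ℝ) : ℝ :=
  pA * phi (tA x) / Real.sqrt (σW ^ 2 + σA ^ 2)
    + (1 - pA) * phi (tB x) / Real.sqrt (σW ^ 2 + σB ^ 2)

/-!
Along the budget line `p_A x + p_B y = α₁` the function `N` has derivative
`p_A (t_A / s_A - t_B / s_B)`, since `φ' = -t φ` and `t_A' = -1/φ(t_A)`,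
`t_B' = (p_A / p_B) / φ(t_B)`. Demographic parity `x = α₁` is the point where `t_A = t_B`, and
the group-oblivious point is where `s_A t_A = s_B t_B = θ̂ - μ`. Between the two points `t_A`
and `t_B` have the sign of `θ̂ - μ`, and because `s_B < s_A` the derivative then has the sign
that makes `N` strictly increase from `x^obl` towards `α₁`. The projection `x^γ` lies between
`x^obl` and `α₁`, because `α₁` itself satisfies the `γ`-rule.
-/

open Filter Topology ProbabilityTheory

lemma phi_eq_gaussianPDFReal : phi = gaussianPDFReal 0 1 := by
  funext t
  simp [phi, gaussianPDFReal, div_eq_inv_mul]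

lemma phi_pos (t : ℝ) : 0 < phi t := by
  rw [phi_eq_gaussianPDFReal]; exact gaussianPDFReal_pos _ _ _ one_ne_zero

lemma integrable_phi : Integrable phi := by
  rw [phi_eq_gaussianPDFReal]; exact integrable_gaussianPDFReal _ _

lemma integral_phi : ∫ u, phi u = 1 := by
  rw [phi_eq_gaussianPDFReal]; exact integral_gaussianPDFReal_eq_one _ one_ne_zero

lemma continuous_phi : Continuous phi := by unfold phi; fun_prop

lemma hasDerivAt_phi (t : ℝ) : HasDerivAt phi (-t * phi t) t := by
  have h : HasDerivAt (fun t : ℝ => -t ^ 2 / 2) (-t) t :=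
    ((hasDerivAt_pow 2 t).neg.div_const 2).congr_deriv (by ring)
  exact (((Real.hasDerivAt_exp _).comp t h).div_const _).congr_deriv (by unfold phi; ring)

lemma setIntegral_phi_pos {s : Set ℝ} (hs : volume s ≠ 0) : 0 < ∫ u in s, phi u := by
  rw [setIntegral_pos_iff_support_of_nonneg_ae (.of_forall fun u => (phi_pos u).le)
    integrable_phi.integrableOn, Function.support_eq_univ fun u => (phi_pos u).ne', univ_inter]
  exact pos_iff_ne_zero.2 hs

lemma Phic_eq_setIntegral_Ioi (t : ℝ) : Phic t = ∫ u in Ioi t, phi u := by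
  rw [Phic, Phi, ← integral_phi, ← intervalIntegral.integral_Iic_add_Ioi integrable_phi.integrableOn
    integrable_phi.integrableOn]
  ring

lemma Phic_mem_Ioo (t : ℝ) : Phic t ∈ Ioo 0 1 := by
  have hPhi : 0 < Phi t := setIntegral_phi_pos (by simp)
  exact ⟨Phic_eq_setIntegral_Ioi t ▸ setIntegral_phi_pos (by simp), by rw [Phic]; linarith⟩

lemma hasDerivAt_Phi (t : ℝ) : HasDerivAt Phi (phi t) t := by
  have hPhi : ∀ u, Phi u = Phi 0 + ∫ x in (0:ℝ)..u, phi x := fun u => by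
    rw [Phi, Phi, ← intervalIntegral.integral_Iic_sub_Iic integrable_phi.integrableOn
      integrable_phi.integrableOn]
    ring
  rw [funext hPhi]
  exact (intervalIntegral.integral_hasDerivAt_right integrable_phi.intervalIntegrable
    (continuous_phi.stronglyMeasurableAtFilter _ _) continuous_phi.continuousAt).const_add _

lemma hasDerivAt_Phic (t : ℝ) : HasDerivAt Phic (-phi t) t :=
  (hasDerivAt_Phi t).const_sub 1

lemma strictAnti_Phic : StrictAnti Phic :=
  strictAnti_of_hasDerivAt_neg hasDerivAt_Phic fun t => neg_neg_iff_pos.2 (phi_pos t)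

lemma StrictAnti.continuousAt_of_comp {α β γ : Type*} [LinearOrder α] [TopologicalSpace α]
    [OrderTopology α] [LinearOrder β] [TopologicalSpace β] [OrderTopology β] [TopologicalSpace γ]
    {f : α → β} {g : γ → α} {x : γ} (hf : StrictAnti f) (hfg : ContinuousAt (f ∘ g) x) :
    ContinuousAt g x := by
  refine tendsto_order.2 ⟨fun a ha => ?_, fun a ha => ?_⟩
  · filter_upwards [(tendsto_order.1 hfg).2 _ (hf ha)] with y hy using hf.lt_iff_gt.1 hy
  · filter_upwards [(tendsto_order.1 hfg).1 _ (hf ha)] with y hy using hf.lt_iff_gt.1 hy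

lemma StrictAnti.hasDerivAt_of_comp_eq_affine {f g : ℝ → ℝ} {f' c m x : ℝ} (hf : StrictAnti f)
    (hfd : HasDerivAt f f' (g x)) (hf' : f' ≠ 0) (hm : m ≠ 0)
    (hfg : ∀ᶠ y in 𝓝 x, f (g y) = c + m * y) : HasDerivAt g (m / f') x := by
  set h : ℝ → ℝ := fun z => g ((z - c) / m)
  have hgh : ∀ y, h (c + m * y) = g y := fun y => by
    simp only [h, add_sub_cancel_left, mul_div_cancel_left₀ _ hm]
  have hL : HasDerivAt (fun y => c + m * y) m x := by
    simpa using ((hasDerivAt_id x).const_mul m).const_add c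
  have hfh : ∀ᶠ z in 𝓝 (c + m * x), f (h z) = z := by
    have hLi : Tendsto (fun z => (z - c) / m) (𝓝 (c + m * x)) (𝓝 x) := by
      have := ((continuous_id.sub (continuous_const (y := c))).div_const m).tendsto (c + m * x)
      simpa [mul_div_cancel_left₀ _ hm] using this
    filter_upwards [hLi.eventually hfg] with z hz
    rw [hz]; field_simp; ring
  have hhd : HasDerivAt h f'⁻¹ (c + m * x) := by
    refine HasDerivAt.of_local_left_inverse ?_ (by rwa [hgh]) hf' hfh
    exact hf.continuousAt_of_comp (continuousAt_id.congr (hfh.mono fun z hz => hz.symm))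
  have := hhd.comp x hL
  simp only [Function.comp_def, hgh] at this
  exact this.congr_deriv (by field_simp)

lemma StrictMonoOn.endpoint_bounds {α β : Type*} [PartialOrder α] [Preorder β] {f : α → β}
    {a b c : α} (hf : StrictMonoOn f (Icc a b)) (hc : c ∈ Icc a b) :
    f c ≤ f b ∧ f a ≤ f c ∧ (c ≠ b → f c < f b) ∧ (c ≠ a → f a < f c) := by
  have ha : a ∈ Icc a b := left_mem_Icc.2 (hc.1.trans hc.2)
  have hb : b ∈ Icc a b := right_mem_Icc.2 (hc.1.trans hc.2)
  exact ⟨hf.monotoneOn hc hb hc.2, hf.monotoneOn ha hc hc.1,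
    fun h => hf hc hb (hc.2.lt_of_ne h), fun h => hf ha hc (hc.1.lt_of_ne' h)⟩

lemma min_max_mem_uIcc {α : Type*} [LinearOrder α] {l u a x : α} (ha : a ∈ Icc l u) :
    min (max x l) u ∈ uIcc x a := by
  rcases le_total x a with h | h
  · rw [uIcc_of_le h]
    exact ⟨le_min (le_max_left _ _) (h.trans ha.2), min_le_of_left_le (max_le h ha.1)⟩
  · rw [uIcc_of_ge h]
    exact ⟨le_min (le_max_of_le_left h) ha.2, min_le_of_left_le (max_le le_rfl (ha.1.trans h))⟩

lemma div_lt_div_iff_neg_of_lt {θ s s' : ℝ} (hs : 0 < s) (hss' : s < s') :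
    θ / s < θ / s' ↔ θ < 0 := by
  rw [div_lt_div_iff₀ hs (hs.trans hss')]
  constructor <;> intro h <;> nlinarith

lemma div_sub_div_pos_of_lt_of_neg {u v s s' : ℝ} (hs : 0 < s) (hss' : s < s') (hvu : v < u)
    (hu : u < 0) : 0 < u / s' - v / s := by
  have hs' : 0 < s' := hs.trans hss'
  rw [div_sub_div _ _ hs'.ne' hs.ne']
  have hnum : 0 < u * s - s' * v := by
    nlinarith [mul_pos hs (sub_pos.2 hvu), mul_pos (neg_pos.2 (hvu.trans hu)) (sub_pos.2 hss')]
  exact div_pos hnum (mul_pos hs' hs)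

lemma div_sub_div_neg_of_lt_of_pos {u v s s' : ℝ} (hs : 0 < s) (hss' : s < s') (huv : u < v)
    (hu : 0 < u) : u / s' - v / s < 0 := by
  have := div_sub_div_pos_of_lt_of_neg hs hss' (neg_lt_neg huv) (neg_neg_of_pos hu)
  rw [neg_div, neg_div] at this
  linarith

lemma convex_feas (pA α₁ : ℝ) : Convex ℝ (feas pA α₁) := by
  have hf : feas pA α₁ = Ioo 0 1 ∩
      AffineMap.lineMap (k := ℝ) (α₁ / (1 - pA)) ((α₁ - pA) / (1 - pA)) ⁻¹' Ioo 0 1 := by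
    ext x
    simp only [feas, mem_ofPred_eq, mem_inter_iff, mem_preimage, AffineMap.lineMap_apply_ring']
    ring_nf
  rw [hf]
  exact (convex_Ioo 0 1).inter ((convex_Ioo 0 1).affine_preimage _)

lemma isOpen_feas (pA α₁ : ℝ) : IsOpen (feas pA α₁) :=
  isOpen_Ioo.inter (isOpen_Ioo.preimage (by fun_prop))

lemma self_mem_feas {pA α₁ : ℝ} (hpA : pA ≠ 1) (hα : α₁ ∈ Ioo 0 1) : α₁ ∈ feas pA α₁ := by
  refine ⟨hα, ?_⟩
  rwa [show (α₁ - pA * α₁) / (1 - pA) = α₁ by field_simp [sub_ne_zero.2 hpA.symm]]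

lemma Phic_mem_feas_of_oblivious {a b pA α₁ : ℝ} (hpA : pA ≠ 1)
    (hθ : pA * Phic a + (1 - pA) * Phic b = α₁) : Phic a ∈ feas pA α₁ := by
  refine ⟨Phic_mem_Ioo a, ?_⟩
  rw [show (α₁ - pA * Phic a) / (1 - pA) = Phic b by
    field_simp [sub_ne_zero.2 hpA.symm]; linarith]
  exact Phic_mem_Ioo b

lemma self_mem_Icc_gamma_bounds {pA α₁ γ : ℝ} (hpA : pA ∈ Ioo 0 1) (hα : 0 ≤ α₁)
    (hγ : γ ∈ Icc 0 1) :
    α₁ ∈ Icc (γ * α₁ / ((1 - pA) + γ * pA)) (α₁ / (pA + γ * (1 - pA))) := by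
  obtain ⟨hpA0, hpA1⟩ := hpA
  have hslack : 0 ≤ α₁ * (1 - pA) * (1 - γ) :=
    mul_nonneg (mul_nonneg hα (sub_pos.2 hpA1).le) (sub_nonneg.2 hγ.2)
  constructor
  · rw [div_le_iff₀ (by nlinarith [hγ.1])]; nlinarith
  · rw [le_div_iff₀ (by nlinarith [hγ.1])]; nlinarith

lemma oblivious_threshold_neg_of_lt {θ sA sB pA α₁ : ℝ} (hpA : pA < 1) (hsB : 0 < sB) (hs : sB < sA)
    (hθ : pA * Phic (θ / sA) + (1 - pA) * Phic (θ / sB) = α₁) (h : Phic (θ / sA) < α₁) :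
    θ / sA < 0 := by
  have hprod : 0 < (1 - pA) * (Phic (θ / sB) - Phic (θ / sA)) := by linarith
  have hPhic := sub_pos.1 (pos_of_mul_pos_right hprod (sub_pos.2 hpA).le)
  have hθneg := (div_lt_div_iff_neg_of_lt hsB hs).1 (strictAnti_Phic.lt_iff_gt.1 hPhic)
  exact div_neg_of_neg_of_pos hθneg (hsB.trans hs)

lemma oblivious_threshold_pos_of_gt {θ sA sB pA α₁ : ℝ} (hpA : pA < 1) (hsB : 0 < sB) (hs : sB < sA)
    (hθ : pA * Phic (θ / sA) + (1 - pA) * Phic (θ / sB) = α₁) (h : α₁ < Phic (θ / sA)) :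
    0 < θ / sA := by
  have hprod : 0 < (1 - pA) * (Phic (θ / sA) - Phic (θ / sB)) := by linarith
  have hPhic := sub_pos.1 (pos_of_mul_pos_right hprod (sub_pos.2 hpA).le)
  have hθneg := (div_lt_div_iff_neg_of_lt hsB hs (θ := -θ)).1 (by
    simpa only [neg_div, neg_lt_neg_iff] using strictAnti_Phic.lt_iff_gt.1 hPhic)
  exact div_pos (neg_neg_iff_pos.1 hθneg) (hsB.trans hs)

section Thresholds

variable {pA α₁ : ℝ} {tA tB : ℝ → ℝ}

lemma tB_lt_tA_iff (hpA : pA < 1) (htA : ∀ x ∈ feas pA α₁, Phic (tA x) = x)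
    (htB : ∀ x ∈ feas pA α₁, Phic (tB x) = (α₁ - pA * x) / (1 - pA)) {y : ℝ}
    (hy : y ∈ feas pA α₁) : tB y < tA y ↔ y < α₁ := by
  rw [← strictAnti_Phic.lt_iff_gt, htA y hy, htB y hy, lt_div_iff₀ (sub_pos.2 hpA)]
  constructor <;> intro h <;> linarith

lemma tA_lt_tB_iff (hpA : pA < 1) (htA : ∀ x ∈ feas pA α₁, Phic (tA x) = x)
    (htB : ∀ x ∈ feas pA α₁, Phic (tB x) = (α₁ - pA * x) / (1 - pA)) {y : ℝ}
    (hy : y ∈ feas pA α₁) : tA y < tB y ↔ α₁ < y := by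
  rw [← strictAnti_Phic.lt_iff_gt, htA y hy, htB y hy, div_lt_iff₀ (sub_pos.2 hpA)]
  constructor <;> intro h <;> linarith

lemma hasDerivAt_Nfun {σW σA σB x : ℝ} (hpA : pA ∈ Ioo 0 1)
    (htA : ∀ x ∈ feas pA α₁, Phic (tA x) = x)
    (htB : ∀ x ∈ feas pA α₁, Phic (tB x) = (α₁ - pA * x) / (1 - pA)) (hx : x ∈ feas pA α₁) :
    HasDerivAt (Nfun σW σA σB pA tA tB)
      (pA * (tA x / √(σW ^ 2 + σA ^ 2) - tB x / √(σW ^ 2 + σB ^ 2))) x := by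
  have hpB : 1 - pA ≠ 0 := sub_ne_zero.2 hpA.2.ne'
  have hfeas : ∀ᶠ y in 𝓝 x, y ∈ feas pA α₁ := (isOpen_feas pA α₁).mem_nhds hx
  have hdA : HasDerivAt tA (1 / -phi (tA x)) x :=
    strictAnti_Phic.hasDerivAt_of_comp_eq_affine (c := 0) (hasDerivAt_Phic _)
      (neg_ne_zero.2 (phi_pos _).ne') one_ne_zero
      (hfeas.mono fun y hy => by rw [htA y hy]; ring)
  have hdB : HasDerivAt tB (-(pA / (1 - pA)) / -phi (tB x)) x :=
    strictAnti_Phic.hasDerivAt_of_comp_eq_affine (c := α₁ / (1 - pA)) (hasDerivAt_Phic _)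
      (neg_ne_zero.2 (phi_pos _).ne') (neg_ne_zero.2 (div_ne_zero hpA.1.ne' hpB))
      (hfeas.mono fun y hy => by rw [htB y hy]; field_simp; ring)
  have hA := (((hasDerivAt_phi _).comp x hdA).const_mul pA).div_const √(σW ^ 2 + σA ^ 2)
  have hB := (((hasDerivAt_phi _).comp x hdB).const_mul (1 - pA)).div_const √(σW ^ 2 + σB ^ 2)
  refine (hA.add hB).congr_deriv ?_
  have hφA := (phi_pos (tA x)).ne'
  have hφB := (phi_pos (tB x)).ne'
  field_simp
  ring

lemma Nfun_strictMonoOn {σW σA σB a : ℝ} (hpA : pA ∈ Ioo 0 1)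
    (hsB : 0 < √(σW ^ 2 + σB ^ 2)) (hs : √(σW ^ 2 + σB ^ 2) < √(σW ^ 2 + σA ^ 2))
    (htA : ∀ x ∈ feas pA α₁, Phic (tA x) = x)
    (htB : ∀ x ∈ feas pA α₁, Phic (tB x) = (α₁ - pA * x) / (1 - pA))
    (ha : a < 0) (hobl : Phic a ∈ feas pA α₁) (hα : α₁ ∈ feas pA α₁) :
    StrictMonoOn (Nfun σW σA σB pA tA tB) (Icc (Phic a) α₁) := by
  have hsub := (convex_feas pA α₁).ordConnected.out hobl hα
  have hderiv := fun y (hy : y ∈ Icc (Phic a) α₁) =>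
    hasDerivAt_Nfun (σW := σW) (σA := σA) (σB := σB) hpA htA htB (hsub hy)
  refine strictMonoOn_of_hasDerivWithinAt_pos (convex_Icc _ _)
    (fun y hy => (hderiv y hy).continuousAt.continuousWithinAt)
    (fun y hy => (hderiv y (interior_subset hy)).hasDerivWithinAt) ?_
  rw [interior_Icc]
  rintro y ⟨hay, hyα⟩
  have hy := hsub ⟨hay.le, hyα.le⟩
  have htAa : tA y < a := strictAnti_Phic.lt_iff_gt.1 (by rwa [htA y hy])
  have htBA : tB y < tA y := (tB_lt_tA_iff hpA.2 htA htB hy).2 hyα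
  exact mul_pos hpA.1 (div_sub_div_pos_of_lt_of_neg hsB hs htBA (htAa.trans ha))

lemma Nfun_strictAntiOn {σW σA σB a : ℝ} (hpA : pA ∈ Ioo 0 1)
    (hsB : 0 < √(σW ^ 2 + σB ^ 2)) (hs : √(σW ^ 2 + σB ^ 2) < √(σW ^ 2 + σA ^ 2))
    (htA : ∀ x ∈ feas pA α₁, Phic (tA x) = x)
    (htB : ∀ x ∈ feas pA α₁, Phic (tB x) = (α₁ - pA * x) / (1 - pA))
    (ha : 0 < a) (hobl : Phic a ∈ feas pA α₁) (hα : α₁ ∈ feas pA α₁) :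
    StrictAntiOn (Nfun σW σA σB pA tA tB) (Icc α₁ (Phic a)) := by
  have hsub := (convex_feas pA α₁).ordConnected.out hα hobl
  have hderiv := fun y (hy : y ∈ Icc α₁ (Phic a)) =>
    hasDerivAt_Nfun (σW := σW) (σA := σA) (σB := σB) hpA htA htB (hsub hy)
  refine strictAntiOn_of_hasDerivWithinAt_neg (convex_Icc _ _)
    (fun y hy => (hderiv y hy).continuousAt.continuousWithinAt)
    (fun y hy => (hderiv y (interior_subset hy)).hasDerivWithinAt) ?_
  rw [interior_Icc]
  rintro y ⟨hαy, hya⟩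
  have hy := hsub ⟨hαy.le, hya.le⟩
  have haA : a < tA y := strictAnti_Phic.lt_iff_gt.1 (by rwa [htA y hy])
  have htAB : tA y < tB y := (tA_lt_tB_iff hpA.2 htA htB hy).2 hαy
  exact mul_neg_of_pos_of_neg hpA.1 (div_sub_div_neg_of_lt_of_pos hsB hs htAB (ha.trans haA))

end Thresholds

/-- One-stage selection: the `γ`-rule weakly beats group-oblivious and
demographic parity weakly beats the `γ`-rule, with strictness whenever the
corresponding selection fractions differ. -/
theorem gamma_rule_one_stage
    (μ σW σA σB pA α₁ γ θhat : ℝ) (tA tB : ℝ → ℝ)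
    (hσW : 0 < σW) (hσB : 0 ≤ σB) (hσAB : σB < σA)
    (hpA : pA ∈ Set.Ioo (0 : ℝ) 1) (hα : α₁ ∈ Set.Ioo (0 : ℝ) 1)
    (hγ : γ ∈ Set.Icc (0 : ℝ) 1)
    (htA : ∀ x ∈ feas pA α₁, Phic (tA x) = x)
    (htB : ∀ x ∈ feas pA α₁, Phic (tB x) = (α₁ - pA * x) / (1 - pA))
    (hθ : pA * Phic ((θhat - μ) / Real.sqrt (σW ^ 2 + σA ^ 2))
        + (1 - pA) * Phic ((θhat - μ) / Real.sqrt (σW ^ 2 + σB ^ 2)) = α₁)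
    (xobl xγ : ℝ)
    (hxobl : xobl = Phic ((θhat - μ) / Real.sqrt (σW ^ 2 + σA ^ 2)))
    (hxγ : xγ = min (max xobl (γ * α₁ / ((1 - pA) + γ * pA))) (α₁ / (pA + γ * (1 - pA)))) :
    xγ ∈ feas pA α₁ ∧
    Nfun σW σA σB pA tA tB xγ ≤ Nfun σW σA σB pA tA tB α₁ ∧
    Nfun σW σA σB pA tA tB xobl ≤ Nfun σW σA σB pA tA tB xγ ∧
    (xγ ≠ α₁ → Nfun σW σA σB pA tA tB xγ < Nfun σW σA σB pA tA tB α₁) ∧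
    (xγ ≠ xobl → Nfun σW σA σB pA tA tB xobl < Nfun σW σA σB pA tA tB xγ) := by
  have hsB : 0 < √(σW ^ 2 + σB ^ 2) := by positivity
  have hs : √(σW ^ 2 + σB ^ 2) < √(σW ^ 2 + σA ^ 2) :=
    Real.sqrt_lt_sqrt (by positivity) (by gcongr)
  have hαfeas := self_mem_feas hpA.2.ne hα
  have hoblfeas : xobl ∈ feas pA α₁ := hxobl ▸ Phic_mem_feas_of_oblivious hpA.2.ne hθ
  have hxγmem : xγ ∈ uIcc xobl α₁ :=
    hxγ ▸ min_max_mem_uIcc (self_mem_Icc_gamma_bounds hpA hα.1.le hγ)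
  have hxγfeas := (convex_feas pA α₁).ordConnected.uIcc_subset hoblfeas hαfeas hxγmem
  rcases lt_trichotomy xobl α₁ with hlt | rfl | hgt
  · rw [uIcc_of_le hlt.le] at hxγmem
    subst hxobl
    have ha := oblivious_threshold_neg_of_lt hpA.2 hsB hs hθ hlt
    exact ⟨hxγfeas,
      (Nfun_strictMonoOn hpA hsB hs htA htB ha hoblfeas hαfeas).endpoint_bounds hxγmem⟩
  · obtain rfl : xγ = xobl := by simpa using hxγmem
    simp [hxγfeas]
  · rw [uIcc_of_ge hgt.le] at hxγmem
    subst hxobl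
    have ha := oblivious_threshold_pos_of_gt hpA.2 hsB hs hθ hgt
    -- `dual_right` turns the decreasing case into the increasing one, endpoints swapped.
    obtain ⟨h₁, h₂, h₃, h₄⟩ :=
      (Nfun_strictAntiOn hpA hsB hs htA htB ha hoblfeas hαfeas).dual_right.endpoint_bounds hxγmem
    exact ⟨hxγfeas, h₂, h₁, h₄, h₃⟩
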